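/- arXiv:1710.05022 — 5 statements merged into one kernel-verified Lean document; each statement's English description precedes it below -/
import Mathlib

section
/- Let b be a g-invariant bilinear form on a g-module V, and W a two-dimensional subspace of V with ρ_v W ⊆ W for a given v ∈ g. Then for any linearly independent f_s, f_t ∈ W, Tr(ρ_v|_W) · b(f_s, f_t) · (f_t ∧ f_s) = b(f_s, f_s) · ((ρ_v f_t) ∧ f_t) + b(f_t, f_t) · (f_s ∧ (ρ_v f_s)) in Λ²V. -/
/-!
In the basis `(f_s, f_t)` of `W` write `ρ_v f_s = a f_s + c f_t` and `ρ_v f_t = d f_s + e f_t`,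
so `Tr(ρ_v|_W) = a + e`. Since `x ∧ x = 0`, the right-hand side is
`(d b(f_s,f_s) + c b(f_t,f_t)) f_s ∧ f_t`, and the invariance
`b(ρ_v f_s, f_t) + b(f_s, ρ_v f_t) = 0` says exactly that this coefficient is `-(a + e) b(f_s,f_t)`.
-/

attribute [local instance 100] LieRing.ofAssociativeRing

open ExteriorAlgebra Module

namespace ExteriorAlgebra

variable {R M : Type*} [CommRing R] [AddCommGroup M] [Module R M]

theorem ιMulti_two (x y : M) : ιMulti R 2 ![x, y] = ι R x * ι R y := by
  simp [ιMulti_apply]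

theorem ι_mul_ι_swap (x y : M) : ι R y * ι R x = -(ι R x * ι R y) :=
  eq_neg_of_add_eq_zero_right (ι_add_mul_swap x y)

theorem ι_smul_add_smul_mul_ι (a c : R) (x y : M) :
    ι R (a • x + c • y) * ι R y = a • (ι R x * ι R y) := by
  rw [map_add, map_smul, map_smul, add_mul, smul_mul_assoc, smul_mul_assoc, ι_sq_zero,
    smul_zero, add_zero]

theorem ι_mul_ι_smul_add_smul (a c : R) (x y : M) :
    ι R x * ι R (a • x + c • y) = c • (ι R x * ι R y) := by
  rw [map_add, map_smul, map_smul, mul_add, mul_smul_comm, mul_smul_comm, ι_sq_zero,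
    smul_zero, zero_add]

end ExteriorAlgebra

section TwoDimensional

variable {K M : Type*} [Field K] [AddCommGroup M] [Module K M]
  (hM : finrank K M = 2) {x y : M} (hxy : LinearIndependent K ![x, y])

include hM hxy in
theorem LinearIndependent.exists_eq_smul_add_smul_of_finrank_eq_two (m : M) :
    ∃ a c : K, m = a • x + c • y := by
  have hspan := hxy.span_eq_top_of_card_eq_finrank (by simp [hM])
  rw [Matrix.range_cons_cons_empty] at hspan
  obtain ⟨a, c, h⟩ := Submodule.mem_span_pair.mp (hspan ▸ Submodule.mem_top : m ∈ _)
  exact ⟨a, c, h.symm⟩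

include hM hxy in
theorem LinearMap.trace_eq_add_of_linearIndependent_pair {f : M →ₗ[K] M} {a c d e : K}
    (hx : f x = a • x + c • y) (hy : f y = d • x + e • y) : LinearMap.trace K M f = a + e := by
  let B := basisOfLinearIndependentOfCardEqFinrank hxy (by simp [hM])
  have hB0 : B 0 = x := by simp [B]
  have hB1 : B 1 = y := by simp [B]
  rw [LinearMap.trace_eq_matrix_trace K B, Matrix.trace_fin_two, LinearMap.toMatrix_apply,
    LinearMap.toMatrix_apply, hB0, hB1, hx, hy, ← hB0, ← hB1]
  simp

end TwoDimensional

theorem LinearMap.BilinForm.smul_ιMulti_eq_of_skew {R M : Type*} [CommRing R] [AddCommGroup M]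
    [Module R M] (b : LinearMap.BilinForm R M) (T : Module.End R M) {x y : M} {a c d e : R}
    (hx : T x = a • x + c • y) (hy : T y = d • x + e • y) (hb : b (T x) y + b x (T y) = 0) :
    (a + e) • b x y • ιMulti R 2 ![y, x] =
      b x x • ιMulti R 2 ![T y, y] + b y y • ιMulti R 2 ![x, T x] := by
  have hcoeff : -((a + e) * b x y) = b x x * d + b y y * c := by
    rw [hx, hy] at hb
    simp only [map_add, map_smul, LinearMap.add_apply, LinearMap.smul_apply, smul_eq_mul] at hb
    linear_combination -hb
  rw [ιMulti_two, ιMulti_two, ιMulti_two, ι_mul_ι_swap, hy, hx, ι_smul_add_smul_mul_ι,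
    ι_mul_ι_smul_add_smul, smul_smul, smul_smul, smul_smul, smul_neg, ← neg_smul, ← add_smul,
    hcoeff]

theorem invariant_form_two_dim_invariant_subspace_general
    (L : Type*) [LieRing L] [LieAlgebra ℝ L]
    (V : Type*) [AddCommGroup V] [Module ℝ V]
    (ρ : L →ₗ⁅ℝ⁆ Module.End ℝ V)
    (b : LinearMap.BilinForm ℝ V)
    (hinv : ∀ (v : L) (x y : V), b (ρ v x) y + b x (ρ v y) = 0)
    (W : Submodule ℝ V) (hW2 : Module.finrank ℝ W = 2)
    (v : L)
    (fs ft : V) (hfs : fs ∈ W) (hft : ft ∈ W)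
    (hli : LinearIndependent ℝ ![fs, ft])
    (f : W →ₗ[ℝ] W) (hf : ∀ y : W, (f y : V) = ρ v (y : V)) :
    (LinearMap.trace ℝ W f) • (b fs ft) • (ExteriorAlgebra.ιMulti ℝ 2 ![ft, fs]) =
      (b fs fs) • (ExteriorAlgebra.ιMulti ℝ 2 ![ρ v ft, ft]) +
      (b ft ft) • (ExteriorAlgebra.ιMulti ℝ 2 ![fs, ρ v fs]) := by
  set s : W := ⟨fs, hfs⟩
  set t : W := ⟨ft, hft⟩
  have hst : LinearIndependent ℝ ![s, t] :=
    LinearIndependent.of_comp W.subtype (by convert hli; ext i; fin_cases i <;> rfl)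
  obtain ⟨a, c, hs⟩ := hst.exists_eq_smul_add_smul_of_finrank_eq_two hW2 (f s)
  obtain ⟨d, e, ht⟩ := hst.exists_eq_smul_add_smul_of_finrank_eq_two hW2 (f t)
  have hρs : ρ v fs = a • fs + c • ft := by simpa [hf] using congrArg Subtype.val hs
  have hρt : ρ v ft = d • fs + e • ft := by simpa [hf] using congrArg Subtype.val ht
  rw [LinearMap.trace_eq_add_of_linearIndependent_pair hW2 hst hs ht]
  exact b.smul_ιMulti_eq_of_skew (ρ v) hρs hρt (hinv v fs ft)

/-- Let `b` be a `g`-invariant bilinear form on a `g`-module `V`, and `W` a two-dimensional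
subspace of `V` with `ρ_v W ⊆ W` for a given `v ∈ g`.  Then, for linearly independent
`f_s, f_t ∈ W`,
`Tr(ρ_v|_W) · b(f_s,f_t) · (f_t ∧ f_s)
  = b(f_s,f_s) · ((ρ_v f_t) ∧ f_t) + b(f_t,f_t) · (f_s ∧ (ρ_v f_s))` in `Λ²V`. -/
theorem invariant_form_two_dim_invariant_subspace
    (L : Type*) [LieRing L] [LieAlgebra ℝ L]
    (V : Type*) [AddCommGroup V] [Module ℝ V] [FiniteDimensional ℝ V]
    (ρ : L →ₗ⁅ℝ⁆ Module.End ℝ V)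
    (b : LinearMap.BilinForm ℝ V)
    (hinv : ∀ (v : L) (x y : V), b (ρ v x) y + b x (ρ v y) = 0)
    (W : Submodule ℝ V) (hW2 : Module.finrank ℝ W = 2)
    (v : L) (hWv : ∀ x ∈ W, ρ v x ∈ W)
    (fs ft : V) (hfs : fs ∈ W) (hft : ft ∈ W)
    (hli : LinearIndependent ℝ ![fs, ft])
    (f : W →ₗ[ℝ] W) (hf : ∀ y : W, (f y : V) = ρ v (y : V)) :
    (LinearMap.trace ℝ W f) • (b fs ft) • (ExteriorAlgebra.ιMulti ℝ 2 ![ft, fs]) =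
      (b fs fs) • (ExteriorAlgebra.ιMulti ℝ 2 ![ρ v ft, ft]) +
      (b ft ft) • (ExteriorAlgebra.ιMulti ℝ 2 ![fs, ρ v fs]) :=
  invariant_form_two_dim_invariant_subspace_general L V ρ b hinv W hW2 v fs ft hfs hft hli f hf
end

section
/- If g admits a root ℤᵏ-gradation, then every g-invariant m-vector lies in the zero-degree homogeneous component: (Λᵐg)^g ⊆ (Λᵐg)^(0). -/
open ExteriorAlgebra

/-- The homogeneous component of degree `α` of the `m`-th exterior power induced by a
`ℤᵏ`-gradation `χ` of the underlying module (additive degrees). -/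
def gradedPieceAdd {L : Type*} [AddCommGroup L] [Module ℝ L] {k : ℕ}
    (χ : (Fin k → ℤ) → Submodule ℝ L) (m : ℕ) (α : Fin k → ℤ) :
    Submodule ℝ (ExteriorAlgebra ℝ L) :=
  Submodule.span ℝ {w | ∃ d : Fin m → (Fin k → ℤ), ∃ x : Fin m → L,
    (∀ i, x i ∈ χ (d i)) ∧ (∑ i, d i) = α ∧ w = ιMulti ℝ m x}

/-!
An element `e` of the Cartan part `g^(0)` acts on the degree-`α` component of `Λᵐg`
by the scalar `𝛂(e)`. An invariant `w` has finitely many nonzero components, and since `T` is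
injective one can choose `e` with `𝛂(e) ≠ 0` for each of their nonzero degrees `α`. Then
`0 = [e, w]` forces every component outside degree `0` to vanish, because eigenspaces of `[e, ·]`
for distinct eigenvalues are independent.
-/

lemma map_one_eq_zero_of_leibniz {A : Type*} [NonAssocRing A] {δ : A → A}
    (h : ∀ a b, δ (a * b) = δ a * b + a * δ b) : δ 1 = 0 := by
  simpa using h 1 1

lemma Module.End.mem_of_mem_sup_iSup_eigenspace_ne_zero {R M : Type*} [CommRing R] [IsDomain R]
    [AddCommGroup M] [Module R M] [IsTorsionFree R M] {f : Module.End R M} {p : Submodule R M}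
    (hp : p ≤ f.eigenspace 0) {x : M} (hx : x ∈ p ⊔ ⨆ (μ) (_ : μ ≠ 0), f.eigenspace μ)
    (hfx : f x = 0) : x ∈ p := by
  obtain ⟨y, hy, z, hz, rfl⟩ := Submodule.mem_sup.mp hx
  have hfy : f y = 0 := by simpa using Module.End.mem_eigenspace_iff.mp (hp hy)
  have hz₀ : z ∈ f.eigenspace 0 := by
    rw [Module.End.mem_eigenspace_iff, zero_smul]
    simpa [hfy] using hfx
  have hz : z = 0 := Submodule.disjoint_def.mp (f.eigenspaces_iSupIndep 0) z hz₀ hz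
  simpa [hz] using hy

lemma exteriorPower_le_iSup_gradedPieceAdd {L : Type*} [AddCommGroup L] [Module ℝ L] {k : ℕ}
    {χ : (Fin k → ℤ) → Submodule ℝ L} (hsup : iSup χ = ⊤) (m : ℕ) :
    ⋀[ℝ]^m L ≤ ⨆ α, gradedPieceAdd χ m α := by
  have hspan : Submodule.span ℝ (⋃ α, (χ α : Set L)) = ⊤ := by
    rw [← Submodule.iSup_eq_span, hsup]
  rw [← exteriorPower.ιMulti_span_fixedDegree_of_span_eq_top (n := m) (hs := hspan), Submodule.span_le]
  rintro - ⟨x, hx, rfl⟩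
  have : ∀ i, ∃ α, x i ∈ χ α := fun i => Set.mem_iUnion.mp (hx ⟨i, rfl⟩)
  choose d hd using this
  exact Submodule.mem_iSup_of_mem (∑ i, d i) (Submodule.subset_span ⟨d, x, hd, rfl, rfl⟩)

section RootGradation

variable {L : Type*} [LieRing L] [LieAlgebra ℝ L] {k : ℕ} {χ : (Fin k → ℤ) → Submodule ℝ L}
  {T : (Fin k → ℤ) →+ Module.Dual ℝ (χ 0)} {D : L →ₗ[ℝ] Module.End ℝ (ExteriorAlgebra ℝ L)}

lemma apply_ιMulti_eq_smul_of_mem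
    (hroot : ∀ (α : Fin k → ℤ) (e : χ 0), ∀ x ∈ χ α, ⁅(e : L), x⁆ = T α e • x)
    (hD1 : ∀ v x : L, D v (ι ℝ x) = ι ℝ ⁅v, x⁆)
    (hDmul : ∀ (v : L) (a b : ExteriorAlgebra ℝ L), D v (a * b) = D v a * b + a * D v b)
    (e : χ 0) {n : ℕ} (d : Fin n → Fin k → ℤ) (x : Fin n → L) (hx : ∀ i, x i ∈ χ (d i)) :
    D e (ιMulti ℝ n x) = T (∑ i, d i) e • ιMulti ℝ n x := by
  induction n with
  | zero => simp [map_one_eq_zero_of_leibniz (hDmul e)]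
  | succ n ih =>
    rw [ιMulti_succ_apply, hDmul, hD1, hroot (d 0) e (x 0) (hx 0),
      ih (Matrix.vecTail d) (Matrix.vecTail x) (fun i => hx i.succ), Fin.sum_univ_succ, map_add,
      LinearMap.add_apply, add_smul, map_smul, smul_mul_assoc, mul_smul_comm]
    rfl

lemma gradedPieceAdd_le_eigenspace
    (hroot : ∀ (α : Fin k → ℤ) (e : χ 0), ∀ x ∈ χ α, ⁅(e : L), x⁆ = T α e • x)
    (hD1 : ∀ v x : L, D v (ι ℝ x) = ι ℝ ⁅v, x⁆)
    (hDmul : ∀ (v : L) (a b : ExteriorAlgebra ℝ L), D v (a * b) = D v a * b + a * D v b)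
    (e : χ 0) (m : ℕ) (α : Fin k → ℤ) :
    gradedPieceAdd χ m α ≤ (D e).eigenspace (T α e) := by
  rw [gradedPieceAdd, Submodule.span_le]
  rintro - ⟨d, x, hx, rfl, rfl⟩
  exact Module.End.mem_eigenspace_iff.mpr (apply_ιMulti_eq_smul_of_mem hroot hD1 hDmul e d x hx)

lemma biSup_gradedPieceAdd_le_sup_iSup_eigenspace_ne_zero
    (hroot : ∀ (α : Fin k → ℤ) (e : χ 0), ∀ x ∈ χ α, ⁅(e : L), x⁆ = T α e • x)
    (hD1 : ∀ v x : L, D v (ι ℝ x) = ι ℝ ⁅v, x⁆)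
    (hDmul : ∀ (v : L) (a b : ExteriorAlgebra ℝ L), D v (a * b) = D v a * b + a * D v b)
    (m : ℕ) (s : Finset (Fin k → ℤ)) (e : χ 0) (he : ∀ α ∈ s, α ≠ 0 → T α e ≠ 0) :
    ⨆ α ∈ s, gradedPieceAdd χ m α ≤
      gradedPieceAdd χ m 0 ⊔ ⨆ (μ) (_ : μ ≠ 0), (D e).eigenspace μ := by
  refine iSup₂_le fun α hα => ?_
  rcases eq_or_ne α 0 with rfl | hα₀
  · exact le_sup_left
  · exact le_sup_of_le_right <| le_iSup₂_of_le (T α e) (he α hα hα₀)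
      (gradedPieceAdd_le_eigenspace hroot hD1 hDmul e m α)

end RootGradation

theorem root_gradation_invariants_in_zero_component_general
    (L : Type*) [LieRing L] [LieAlgebra ℝ L] (k : ℕ)
    (χ : (Fin k → ℤ) → Submodule ℝ L)
    (hsup : iSup χ = ⊤)
    (T : (Fin k → ℤ) →+ Module.Dual ℝ (χ 0))
    (hT : Function.Injective T)
    (hroot : ∀ (α : Fin k → ℤ) (e : χ 0), ∀ x ∈ χ α, ⁅(e : L), x⁆ = T α e • x)
    (D : L →ₗ[ℝ] Module.End ℝ (ExteriorAlgebra ℝ L))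
    (hD1 : ∀ v x : L, D v (ι ℝ x) = ι ℝ ⁅v, x⁆)
    (hDmul : ∀ (v : L) (a b : ExteriorAlgebra ℝ L), D v (a * b) = D v a * b + a * D v b)
    (m : ℕ) (w : ExteriorAlgebra ℝ L) (hw : w ∈ ⋀[ℝ]^m L)
    (hinv : ∀ v : L, D v w = 0) :
    w ∈ gradedPieceAdd χ m 0 := by
  obtain ⟨s, hs⟩ :=
    Submodule.mem_iSup_iff_exists_finset.mp (exteriorPower_le_iSup_gradedPieceAdd hsup m hw)
  obtain ⟨e, he⟩ := Module.Dual.exists_forall_ne_zero_of_forall_exists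
    (fun α : s.erase 0 => T α) fun α =>
      DFunLike.ne_iff.mp ((map_ne_zero_iff T hT).mpr (Finset.ne_of_mem_erase α.2))
  have hzero : gradedPieceAdd χ m 0 ≤ (D e).eigenspace 0 := by
    simpa using gradedPieceAdd_le_eigenspace hroot hD1 hDmul e m 0
  refine Module.End.mem_of_mem_sup_iSup_eigenspace_ne_zero hzero ?_ (hinv e)
  exact biSup_gradedPieceAdd_le_sup_iSup_eigenspace_ne_zero hroot hD1 hDmul m s e
    (fun α hα hα₀ => he ⟨α, Finset.mem_erase.mpr ⟨hα₀, hα⟩⟩) hs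

/-- If `g` admits a root `ℤᵏ`-gradation (a `ℤᵏ`-gradation with `dim g^(0) = k` and an injective
group morphism `T : ℤᵏ → (g^(0))*` such that `[e, x] = T(α)(e) • x` for `e ∈ g^(0)` and
`x ∈ g^(α)`), then every `g`-invariant `m`-vector lies in the zero-degree homogeneous
component: `(Λᵐg)^g ⊆ (Λᵐg)^(0)`.  Here `D` is the Schouten action of `g` on `Λg`. -/
theorem root_gradation_invariants_in_zero_component
    (L : Type*) [LieRing L] [LieAlgebra ℝ L] (k : ℕ)
    (χ : (Fin k → ℤ) → Submodule ℝ L)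
    (hind : iSupIndep χ) (hsup : iSup χ = ⊤)
    (hbr : ∀ (α β : Fin k → ℤ), ∀ x ∈ χ α, ∀ y ∈ χ β, ⁅x, y⁆ ∈ χ (α + β))
    (hdim : Module.finrank ℝ (χ 0) = k)
    (T : (Fin k → ℤ) →+ Module.Dual ℝ (χ 0))
    (hT : Function.Injective T)
    (hroot : ∀ (α : Fin k → ℤ) (e : χ 0), ∀ x ∈ χ α, ⁅(e : L), x⁆ = T α e • x)
    (D : L →ₗ[ℝ] Module.End ℝ (ExteriorAlgebra ℝ L))
    (hD1 : ∀ v x : L, D v (ι ℝ x) = ι ℝ ⁅v, x⁆)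
    (hDmul : ∀ (v : L) (a b : ExteriorAlgebra ℝ L), D v (a * b) = D v a * b + a * D v b)
    (m : ℕ) (w : ExteriorAlgebra ℝ L) (hw : w ∈ ⋀[ℝ]^m L)
    (hinv : ∀ v : L, D v w = 0) :
    w ∈ gradedPieceAdd χ m 0 :=
  root_gradation_invariants_in_zero_component_general L k χ hsup T hT hroot D hD1 hDmul m w hw hinv
end

section
/- A nonzero decomposable element Ω = v₁ ∧ … ∧ v_m ∈ Λᵐg is g-invariant (i.e. [v, Ω]_S = 0 for all v ∈ g) if and only if h := span{v₁,…,v_m} is an ideal of g on which every ad_v acts tracelessly; moreover ⟨Ω⟩ = Λ^{dim h} h. This gives a one-to-one correspondence between one-dimensional spaces of decomposable g-invariant multivectors and nonzero ideals of g on which g acts tracelessly. -/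
open ExteriorAlgebra

/-!
The Schouten action of `v` is the derivation of `Λg` extending `ad_v`, so it sends
`Ω = x₁ ∧ ⋯ ∧ x_m` to `∑ᵢ x₁ ∧ ⋯ ∧ [v, xᵢ] ∧ ⋯ ∧ x_m`. Since `Ω ∧ y = 0` exactly when `y ∈ h`,
applying the derivation to `Ω ∧ y` shows that invariance forces `[v, h] ⊆ h`. Once `h` is
`ad_v`-stable, the `i`-th summand is the `i`-th diagonal entry of `ad_v|_h` times `Ω`, so the
action of `v` on `Ω` is multiplication by `tr (ad_v|_h)`, and `Ω ≠ 0`. Finally, a wedge of `m`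
vectors of `h` is their determinant in the basis `x` times `Ω`.
-/
theorem AlternatingMap.apply_eq_det_smul_apply_basis {R M N ι : Type*} [CommRing R]
    [AddCommGroup M] [Module R M] [AddCommGroup N] [Module R N] [Fintype ι] [DecidableEq ι]
    (e : Module.Basis ι R M) (f : M [⋀^ι]→ₗ[R] N) (v : ι → M) :
    f v = e.det v • f e := by
  have hf : f = (LinearMap.toSpanSingleton R N (f e)).compAlternatingMap e.det := by
    refine e.ext_alternating fun i hi => ?_
    let σ : Equiv.Perm ι := Equiv.ofBijective i (Finite.injective_iff_bijective.1 hi)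
    change f (e ∘ σ) = (LinearMap.toSpanSingleton R N (f e)).compAlternatingMap e.det (e ∘ σ)
    simp [AlternatingMap.map_perm, Module.Basis.det_self, Units.smul_def]
  conv_lhs => rw [hf]
  simp

theorem Module.Basis.det_update_self {R M ι : Type*} [CommRing R] [AddCommGroup M] [Module R M]
    [Fintype ι] [DecidableEq ι] (e : Module.Basis ι R M) (i : ι) (z : M) :
    e.det (Function.update e i z) = e.coord i z := by
  change e.det.toMultilinearMap.toLinearMap e i z = e.coord i z
  congr 1
  refine e.ext fun k => ?_
  rcases eq_or_ne k i with rfl | hki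
  · simp [Module.Basis.det_self]
  · rw [MultilinearMap.toLinearMap_apply, e.coord_apply, e.repr_self,
      Finsupp.single_eq_of_ne hki.symm]
    exact e.det.map_eq_zero_of_eq _ (by simp [hki]) hki

namespace ExteriorAlgebra

section CommRing

variable {R M : Type*} [CommRing R] [AddCommGroup M] [Module R M]

theorem ιMulti_snoc {n : ℕ} (w : Fin n → M) (z : M) :
    ιMulti R (n + 1) (Fin.snoc w z) = ιMulti R n w * ι R z := by
  rw [ιMulti_apply, ιMulti_apply, List.ofFn_succ']
  simp

theorem ιMulti_eq_det_smul {m : ℕ} {x : Fin m → M} (hx : LinearIndependent R x)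
    (y : Fin m → Submodule.span R (Set.range x)) :
    ιMulti R m (fun i => (y i : M)) = (Module.Basis.span hx).det y • ιMulti R m x := by
  let F := (ιMulti R m).compLinearMap (Submodule.span R (Set.range x)).subtype
  have hF : F (Module.Basis.span hx) = ιMulti R m x :=
    congrArg _ (funext (Module.Basis.span_apply hx))
  rw [← hF, ← F.apply_eq_det_smul_apply_basis]
  rfl

theorem ιMulti_update_of_mem_span {m : ℕ} {x : Fin m → M} (hx : LinearIndependent R x)
    (i : Fin m) {z : M} (hz : z ∈ Submodule.span R (Set.range x)) :
    ιMulti R m (Function.update x i z) =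
      (Module.Basis.span hx).coord i ⟨z, hz⟩ • ιMulti R m x := by
  have hupdate : Function.update x i z =
      fun j => (Function.update (Module.Basis.span hx) i ⟨z, hz⟩ j : M) := by
    funext j
    rcases eq_or_ne j i with rfl | hji
    · simp
    · simp [hji, Module.Basis.span_apply]
  rw [hupdate, ιMulti_eq_det_smul, Module.Basis.det_update_self]

theorem ιMulti_mem_span_singleton_of_mem_span {m : ℕ} {x y : Fin m → M}
    (hx : LinearIndependent R x) (hy : ∀ i, y i ∈ Submodule.span R (Set.range x)) :
    ιMulti R m y ∈ R ∙ ιMulti R m x := by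
  rw [show y = fun i => ((⟨y i, hy i⟩ : Submodule.span R (Set.range x)) : M) from rfl,
    ιMulti_eq_det_smul hx]
  exact Submodule.smul_mem _ _ (Submodule.mem_span_singleton_self _)

/- Mathlib's `Derivation` needs a commutative algebra, so for the exterior algebra the Leibniz
rule is assumed explicitly. -/
theorem leibniz_apply_ιMulti {d : Module.End R (ExteriorAlgebra R M)} {T : M →ₗ[R] M}
    (hdι : ∀ y, d (ι R y) = ι R (T y)) (hd_mul : ∀ a b, d (a * b) = d a * b + a * d b)
    (n : ℕ) (w : Fin n → M) :
    d (ιMulti R n w) = ∑ i, ιMulti R n (Function.update w i (T (w i))) := by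
  induction n with
  | zero =>
    have h1 : d 1 = 0 := by simpa using hd_mul 1 1
    simp [h1]
  | succ n ih =>
    refine Fin.snocCases (fun w z => ?_) w
    rw [ιMulti_snoc, hd_mul, hdι, ih, Fin.sum_univ_castSucc, Finset.sum_mul]
    simp only [← Fin.snoc_update, Fin.update_snoc_last, Fin.snoc_castSucc, Fin.snoc_last,
      ιMulti_snoc]

theorem leibniz_apply_ιMulti_eq_trace_smul {d : Module.End R (ExteriorAlgebra R M)}
    {T : M →ₗ[R] M} (hdι : ∀ y, d (ι R y) = ι R (T y))
    (hd_mul : ∀ a b, d (a * b) = d a * b + a * d b) {m : ℕ} {x : Fin m → M}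
    (hx : LinearIndependent R x)
    (hT : ∀ y ∈ Submodule.span R (Set.range x), T y ∈ Submodule.span R (Set.range x)) :
    d (ιMulti R m x) = LinearMap.trace R _ (T.restrict hT) • ιMulti R m x := by
  set b := Module.Basis.span hx
  have hb : ∀ i, b i = ⟨x i, Submodule.subset_span ⟨i, rfl⟩⟩ := Module.Basis.span_apply hx
  rw [leibniz_apply_ιMulti hdι hd_mul, LinearMap.trace_eq_matrix_trace R b, Matrix.trace,
    Finset.sum_smul]
  refine Finset.sum_congr rfl fun i _ => ?_
  rw [ιMulti_update_of_mem_span hx i (hT _ (Submodule.subset_span ⟨i, rfl⟩)), Matrix.diag_apply,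
    LinearMap.toMatrix_apply, hb, b.coord_apply]
  rfl

end CommRing

section Field

variable {K M : Type*} [Field K] [AddCommGroup M] [Module K M]

theorem ιMulti_eq_zero_iff {n : ℕ} {v : Fin n → M} :
    ιMulti K n v = 0 ↔ ¬LinearIndependent K v := by
  refine ⟨fun h hv => ?_, (ιMulti K n).map_linearDependent v⟩
  have hne := (exteriorPower.ιMulti_family_linearIndependent_field (n := n) hv).ne_zero
    ⟨Finset.univ, Finset.card_fin n⟩
  have hid : ⇑(Finset.univ.orderEmbOfFin (Finset.card_fin n)) = id :=
    (Finset.orderEmbOfFin_unique _ (fun _ => Finset.mem_univ _) strictMono_id).symm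
  simp only [exteriorPower.ιMulti_family, Set.powersetCard.ofFinEmbEquiv_symm_apply, hid,
    Function.comp_id] at hne
  rw [ne_eq, ← Submodule.coe_eq_zero, exteriorPower.ιMulti_apply_coe] at hne
  exact hne h

theorem ιMulti_mul_ι_eq_zero_iff {n : ℕ} {w : Fin n → M} (hw : LinearIndependent K w) (z : M) :
    ιMulti K n w * ι K z = 0 ↔ z ∈ Submodule.span K (Set.range w) := by
  rw [← ιMulti_snoc, ιMulti_eq_zero_iff, linearIndependent_finSnoc]
  simp [hw]

theorem leibniz_apply_ιMulti_eq_zero_iff {d : Module.End K (ExteriorAlgebra K M)}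
    {T : M →ₗ[K] M} (hdι : ∀ y, d (ι K y) = ι K (T y))
    (hd_mul : ∀ a b, d (a * b) = d a * b + a * d b) {m : ℕ} {x : Fin m → M}
    (hx : LinearIndependent K x) :
    d (ιMulti K m x) = 0 ↔
      (∀ y ∈ Submodule.span K (Set.range x), T y ∈ Submodule.span K (Set.range x)) ∧
      ∀ f : Submodule.span K (Set.range x) →ₗ[K] Submodule.span K (Set.range x),
        (∀ y, (f y : M) = T y) → LinearMap.trace K _ f = 0 := by
  refine ⟨fun h => ?_, fun ⟨hT, htr⟩ => ?_⟩
  · have hT : ∀ y ∈ Submodule.span K (Set.range x), T y ∈ Submodule.span K (Set.range x) := by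
      intro y hy
      have h0 := hd_mul (ιMulti K m x) (ι K y)
      rw [(ιMulti_mul_ι_eq_zero_iff hx y).2 hy, map_zero, h, zero_mul, zero_add, hdι] at h0
      exact (ιMulti_mul_ι_eq_zero_iff hx _).1 h0.symm
    refine ⟨hT, fun f hf => ?_⟩
    have hf_eq : f = T.restrict hT := LinearMap.ext fun y => Subtype.ext (hf y)
    have htr := leibniz_apply_ιMulti_eq_trace_smul hdι hd_mul hx hT
    rw [h, ← hf_eq, eq_comm, smul_eq_zero] at htr
    exact htr.resolve_right (ιMulti_eq_zero_iff.not.2 (not_not.2 hx))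
  · rw [leibniz_apply_ιMulti_eq_trace_smul hdι hd_mul hx hT, htr _ fun y => rfl, zero_smul]

end Field

end ExteriorAlgebra

theorem decomposable_invariant_iff_traceless_ideal_general
    (L : Type*) [LieRing L] [LieAlgebra ℝ L]
    (D : L →ₗ[ℝ] Module.End ℝ (ExteriorAlgebra ℝ L))
    (hD1 : ∀ v x : L, D v (ι ℝ x) = ι ℝ ⁅v, x⁆)
    (hDmul : ∀ (v : L) (a b : ExteriorAlgebra ℝ L), D v (a * b) = D v a * b + a * D v b)
    (m : ℕ) (x : Fin m → L) (hx : LinearIndependent ℝ x)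
    (h : Submodule ℝ L) (hh : h = Submodule.span ℝ (Set.range x)) :
    ((∀ v : L, D v (ιMulti ℝ m x) = 0) ↔
      ((∀ v : L, ∀ y ∈ h, ⁅v, y⁆ ∈ h) ∧
        (∀ (v : L) (f : h →ₗ[ℝ] h),
          (∀ y : h, (f y : L) = ⁅v, (y : L)⁆) → LinearMap.trace ℝ h f = 0))) ∧
    Submodule.span ℝ {ιMulti ℝ m x} =
      Submodule.span ℝ {u | ∃ y : Fin m → L, (∀ i, y i ∈ h) ∧ u = ιMulti ℝ m y} := by
  subst hh
  refine ⟨(forall_congr' fun v => ?_).trans forall_and, le_antisymm ?_ ?_⟩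
  · exact leibniz_apply_ιMulti_eq_zero_iff (T := LieAlgebra.ad ℝ L v) (hD1 v) (hDmul v) hx
  · exact Submodule.span_le.2 <| Set.singleton_subset_iff.2 <|
      Submodule.subset_span ⟨x, fun i => Submodule.subset_span ⟨i, rfl⟩, rfl⟩
  · exact Submodule.span_le.2 fun _ ⟨y, hy, hu⟩ =>
      hu ▸ ιMulti_mem_span_singleton_of_mem_span hx hy

/-- A nonzero decomposable element `Ω = v₁ ∧ … ∧ v_m ∈ Λᵐg` (with `v₁, …, v_m` linearly
independent) is `g`-invariant if and only if `h := span{v₁,…,v_m}` is an ideal of `g` on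
which every `ad_v` acts tracelessly; moreover `⟨Ω⟩ = Λ^{dim h} h`.  (This is the content of
the one-to-one correspondence between one-dimensional spaces of decomposable `g`-invariant
multivectors and nonzero ideals of `g` on which `g` acts tracelessly.)  Here `D` is the
Schouten action of `g` on `Λg`. -/
theorem decomposable_invariant_iff_traceless_ideal
    (L : Type*) [LieRing L] [LieAlgebra ℝ L] [FiniteDimensional ℝ L]
    (D : L →ₗ[ℝ] Module.End ℝ (ExteriorAlgebra ℝ L))
    (hD1 : ∀ v x : L, D v (ι ℝ x) = ι ℝ ⁅v, x⁆)
    (hDmul : ∀ (v : L) (a b : ExteriorAlgebra ℝ L), D v (a * b) = D v a * b + a * D v b)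
    (m : ℕ) (x : Fin m → L) (hx : LinearIndependent ℝ x)
    (h : Submodule ℝ L) (hh : h = Submodule.span ℝ (Set.range x)) :
    ((∀ v : L, D v (ιMulti ℝ m x) = 0) ↔
      ((∀ v : L, ∀ y ∈ h, ⁅v, y⁆ ∈ h) ∧
        (∀ (v : L) (f : h →ₗ[ℝ] h),
          (∀ y : h, (f y : L) = ⁅v, (y : L)⁆) → LinearMap.trace ℝ h f = 0))) ∧
    Submodule.span ℝ {ιMulti ℝ m x} =
      Submodule.span ℝ {u | ∃ y : Fin m → L, (∀ i, y i ∈ h) ∧ u = ιMulti ℝ m y} :=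
  decomposable_invariant_iff_traceless_ideal_general L D hD1 hDmul m x hx h hh
end

section
/- Let g be a nilpotent Lie algebra with lower central series g = g₀ ⊇ g₁ ⊇ … ⊇ g_{p-1} ⊇ g_p = 0, g_{p-1} ≠ 0. If the center z(g) is one-dimensional, then z(g) ∧ g_{p-2} ⊆ (Λ²g)^g, i.e. every wedge of a central element with an element of g_{p-2} is g-invariant. -/
/-! Since `⁅v, a⁆ = 0`, the Schouten derivative of `a ∧ c` is `a ∧ ⁅v, c⁆`. As `⁅v, c⁆` lies in the
last nonzero term of the lower central series it is central, so it is a multiple of `a` when the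
centre is a line, and the wedge vanishes. -/

open ExteriorAlgebra

namespace LieModule

variable {R L M : Type*} [CommRing R] [LieRing L] [LieAlgebra R L]
  [AddCommGroup M] [Module R M] [LieRingModule L M]

theorem lie_mem_lowerCentralSeries_succ (x : L) {m : M} {k : ℕ}
    (hm : m ∈ lowerCentralSeries R L M k) : ⁅x, m⁆ ∈ lowerCentralSeries R L M (k + 1) := by
  rw [lowerCentralSeries_succ]
  exact LieSubmodule.lie_mem_lie (LieSubmodule.mem_top x) hm

theorem mem_maxTrivSubmodule_of_lowerCentralSeries_succ_eq_bot [LieModule R L M] {k : ℕ}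
    (hk : lowerCentralSeries R L M (k + 1) = ⊥) {m : M} (hm : m ∈ lowerCentralSeries R L M k) :
    m ∈ maxTrivSubmodule R L M := fun x => by
  have := lie_mem_lowerCentralSeries_succ (R := R) x hm
  rwa [hk, LieSubmodule.mem_bot] at this

end LieModule

namespace ExteriorAlgebra

theorem ι_mul_ι_eq_zero_of_finrank_eq_one {K V : Type*} [Field K] [AddCommGroup V] [Module K V]
    {S : Submodule K V} (hS : Module.finrank K S = 1) {a b : V} (ha : a ∈ S) (hb : b ∈ S) :
    ι K a * ι K b = 0 := by
  obtain ⟨e, -, he⟩ := finrank_eq_one_iff'.mp hS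
  obtain ⟨s, hs⟩ := he ⟨a, ha⟩
  obtain ⟨t, ht⟩ := he ⟨b, hb⟩
  have hsa : s • (e : V) = a := congrArg Subtype.val hs
  have htb : t • (e : V) = b := congrArg Subtype.val ht
  rw [← hsa, ← htb, map_smul, map_smul, smul_mul_smul_comm, ι_sq_zero, smul_zero]

end ExteriorAlgebra

theorem center_wedge_lower_central_invariant_general
    (L : Type*) [LieRing L] [LieAlgebra ℝ L]
    (D : L →ₗ[ℝ] Module.End ℝ (ExteriorAlgebra ℝ L))
    (hD1 : ∀ v x : L, D v (ι ℝ x) = ι ℝ ⁅v, x⁆)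
    (hDmul : ∀ (v : L) (a b : ExteriorAlgebra ℝ L), D v (a * b) = D v a * b + a * D v b)
    (p : ℕ)
    (hp : LieModule.lowerCentralSeries ℝ L L (p + 2) = ⊥)
    (hz : Module.finrank ℝ (LieAlgebra.center ℝ L) = 1)
    (a c : L) (ha : a ∈ LieAlgebra.center ℝ L) (hc : c ∈ LieModule.lowerCentralSeries ℝ L L p) :
    ∀ v : L, D v (ι ℝ a * ι ℝ c) = 0 := by
  intro v
  have hvc : ⁅v, c⁆ ∈ LieAlgebra.center ℝ L :=
    LieModule.mem_maxTrivSubmodule_of_lowerCentralSeries_succ_eq_bot hp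
      (LieModule.lie_mem_lowerCentralSeries_succ v hc)
  rw [hDmul, hD1, hD1, ha v, map_zero, zero_mul, zero_add]
  exact ι_mul_ι_eq_zero_of_finrank_eq_one (S := (LieAlgebra.center ℝ L).toSubmodule) hz ha hvc

/-- Let `g` be a nilpotent Lie algebra with lower central series
`g = g₀ ⊇ g₁ ⊇ … ⊇ g_{p-1} ≠ 0`, `g_p = 0` (here reindexed so that `g_{p+2} = 0` and
`g_{p+1} ≠ 0`).  If the center `z(g)` is one-dimensional, then
`z(g) ∧ g_{p-2} ⊆ (Λ²g)^g`: every wedge of a central element with an element of `g_{p-2}` is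
`g`-invariant.  Here `D` is the Schouten action of `g` on `Λg`. -/
theorem center_wedge_lower_central_invariant
    (L : Type*) [LieRing L] [LieAlgebra ℝ L]
    (D : L →ₗ[ℝ] Module.End ℝ (ExteriorAlgebra ℝ L))
    (hD1 : ∀ v x : L, D v (ι ℝ x) = ι ℝ ⁅v, x⁆)
    (hDmul : ∀ (v : L) (a b : ExteriorAlgebra ℝ L), D v (a * b) = D v a * b + a * D v b)
    (p : ℕ)
    (hp : LieModule.lowerCentralSeries ℝ L L (p + 2) = ⊥)
    (hne : LieModule.lowerCentralSeries ℝ L L (p + 1) ≠ ⊥)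
    (hz : Module.finrank ℝ (LieAlgebra.center ℝ L) = 1)
    (a c : L) (ha : a ∈ LieAlgebra.center ℝ L) (hc : c ∈ LieModule.lowerCentralSeries ℝ L L p) :
    ∀ v : L, D v (ι ℝ a * ι ℝ c) = 0 :=
  center_wedge_lower_central_invariant_general L D hD1 hDmul p hp hz a c ha hc
end

section
/- Let g be a Lie algebra with nonzero Killing form κ whose first derived ideal g₁ = [g,g] is a two-dimensional abelian subalgebra contained in the kernel of κ. Then for every v ∉ g₁ and every Lie algebra automorphism T of g, either Tv ∈ v + g₁ or Tv ∈ -v + g₁, and T maps eigenvectors of ad_v|_{g₁} to eigenvectors of ad_v|_{g₁}. -/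
/-!
Since `g₁` has codimension one, `g = g₁ ⊕ ℝ v`; as `g₁` lies in the radical of the nonzero
Killing form `κ`, this forces `κ(v, v) ≠ 0`. Writing `T v = u + a v` with `u ∈ g₁`, invariance
of `κ` gives `a² κ(v, v) = κ(v, v)`, so `a = ±1`. Because `g₁` is abelian and `T g₁ = g₁`,
`ad_{T v} = a · ad_v` on `g₁`, so `T` turns an eigenvector of `ad_v` with eigenvalue `c` into
one with eigenvalue `c / a`.
-/

open Module LieAlgebra

theorem Submodule.exists_mem_add_smul_of_finrank_eq_succ {K V : Type*} [DivisionRing K]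
    [AddCommGroup V] [Module K V] [FiniteDimensional K V] {p : Submodule K V}
    (hp : finrank K V = finrank K p + 1) {v : V} (hv : v ∉ p) (x : V) :
    ∃ u ∈ p, ∃ a : K, x = u + a • v := by
  have hlt : p < p ⊔ K ∙ v :=
    lt_of_le_of_ne le_sup_left fun h ↦ hv (h ▸ mem_sup_right (mem_span_singleton_self v))
  have htop : p ⊔ K ∙ v = ⊤ := by
    apply eq_top_of_finrank_eq
    have := finrank_lt_finrank_of_lt hlt
    have := finrank_le (p ⊔ K ∙ v)
    omega
  obtain ⟨u, hu, z, hz, rfl⟩ := mem_sup.mp (htop ▸ mem_top : x ∈ p ⊔ K ∙ v)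
  obtain ⟨a, rfl⟩ := mem_span_singleton.mp hz
  exact ⟨u, hu, a, rfl⟩

namespace LinearMap.BilinForm

variable {R M : Type*} [CommSemiring R] [AddCommMonoid M] [Module R M]
  {B : LinearMap.BilinForm R M}

theorem IsSymm.apply_add_smul_add_smul (hB : B.IsSymm) {u₁ u₂ : M} (hu₁ : ∀ y, B u₁ y = 0)
    (hu₂ : ∀ y, B u₂ y = 0) (v : M) (a₁ a₂ : R) :
    B (u₁ + a₁ • v) (u₂ + a₂ • v) = a₁ * a₂ * B v v := by
  simp only [map_add, map_smul, LinearMap.add_apply, LinearMap.smul_apply, hu₁, hB.eq v u₂, hu₂,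
    smul_eq_mul]
  ring

theorem IsSymm.apply_self_ne_zero_of_forall_eq_add_smul (hB : B.IsSymm) (hB₀ : B ≠ 0)
    {p : Submodule R M} (hp : ∀ x ∈ p, ∀ y, B x y = 0) {v : M}
    (hv : ∀ x, ∃ u ∈ p, ∃ a : R, x = u + a • v) : B v v ≠ 0 := by
  intro hvv
  refine hB₀ (ext fun x y ↦ ?_)
  obtain ⟨u₁, hu₁, a₁, rfl⟩ := hv x
  obtain ⟨u₂, hu₂, a₂, rfl⟩ := hv y
  rw [hB.apply_add_smul_add_smul (hp u₁ hu₁) (hp u₂ hu₂), hvv, mul_zero, zero_apply]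

end LinearMap.BilinForm

theorem LieHom.lie_apply_eq_smul_apply {K L : Type*} [Field K] [LieRing L] [LieAlgebra K L]
    (f : L →ₗ⁅K⁆ L) {u v w : L} {a c : K} (ha : a ≠ 0) (hfv : f v = u + a • v)
    (hu : ⁅u, f w⁆ = 0) (hvw : ⁅v, w⁆ = c • w) : ⁅v, f w⁆ = (a⁻¹ * c) • f w := by
  have : a • ⁅v, f w⁆ = c • f w := by
    rw [← smul_lie, ← zero_add ⁅a • v, f w⁆, ← hu, ← add_lie, ← hfv, ← f.map_lie, hvw,
      map_smul]
  rw [mul_smul, ← this, inv_smul_smul₀ ha]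

/-- Let `g` be a (three-dimensional) Lie algebra with nonzero Killing form `κ` whose first
derived ideal `g₁ = [g,g]` is a two-dimensional abelian subalgebra contained in the kernel of
`κ`.  Then for every `v ∉ g₁` and every Lie algebra automorphism `T` of `g`, either
`Tv ∈ v + g₁` or `Tv ∈ -v + g₁`, and `T` maps eigenvectors of `ad_v|_{g₁}` to eigenvectors of
`ad_v|_{g₁}`. -/
theorem automorphism_preserves_eigenvectors_of_ad
    (L : Type*) [LieRing L] [LieAlgebra ℝ L] [FiniteDimensional ℝ L]
    (hL : Module.finrank ℝ L = 3)
    (hκ : killingForm ℝ L ≠ 0)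
    (hdim : Module.finrank ℝ (LieAlgebra.derivedSeries ℝ L 1) = 2)
    (hab : ∀ x ∈ LieAlgebra.derivedSeries ℝ L 1, ∀ y ∈ LieAlgebra.derivedSeries ℝ L 1,
      ⁅x, y⁆ = (0 : L))
    (hker : ∀ x ∈ LieAlgebra.derivedSeries ℝ L 1, ∀ y : L, killingForm ℝ L x y = 0)
    (T : L ≃ₗ⁅ℝ⁆ L) (v : L) (hv : v ∉ LieAlgebra.derivedSeries ℝ L 1) :
    (T v - v ∈ LieAlgebra.derivedSeries ℝ L 1 ∨ T v + v ∈ LieAlgebra.derivedSeries ℝ L 1) ∧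
    (∀ (w : L) (c : ℝ), w ∈ LieAlgebra.derivedSeries ℝ L 1 → w ≠ 0 → ⁅v, w⁆ = c • w →
      T w ∈ LieAlgebra.derivedSeries ℝ L 1 ∧ ∃ c' : ℝ, ⁅v, T w⁆ = c' • T w) := by
  set I := derivedSeries ℝ L 1
  have hT : ∀ x ∈ I, T x ∈ I := fun x hx ↦
    LieIdeal.derivedSeries_map_le (f := (T : L →ₗ⁅ℝ⁆ L)) 1 (LieIdeal.mem_map hx)
  have hκsymm := LinearMap.BilinForm.isSymm_iff.mpr (LieModule.traceForm_isSymm ℝ L L)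
  have hdec := Submodule.exists_mem_add_smul_of_finrank_eq_succ (p := I.toSubmodule)
    (hL.trans (congrArg (· + 1) hdim).symm) hv
  have hκv := hκsymm.apply_self_ne_zero_of_forall_eq_add_smul hκ hker hdec
  obtain ⟨u, hu, a, hTv⟩ := hdec (T v)
  have ha : a * a = 1 := by
    have hκT := killingForm_of_equiv_apply T v v
    rw [hTv, hκsymm.apply_add_smul_add_smul (hker u hu) (hker u hu)] at hκT
    exact mul_right_cancel₀ hκv (hκT.trans (one_mul _).symm)
  refine ⟨?_, fun w c hw _ hvw ↦ ⟨hT w hw, a⁻¹ * c, ?_⟩⟩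
  · rcases mul_self_eq_one_iff.mp ha with rfl | rfl
    · left; simpa [hTv] using hu
    · right; simpa [hTv] using hu
  · exact (T : L →ₗ⁅ℝ⁆ L).lie_apply_eq_smul_apply (left_ne_zero_of_mul_eq_one ha) hTv
      (hab u hu (T w) (hT w hw)) hvw
end
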